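/- Let g be a natural number. The map sending (B₁, …, B_g) ∈ Sp(1)^g to the simultaneous-conjugation orbit of the tuple (B₁, …, B_g, 𝐢, 𝐣, −𝐤) is a bijection from Sp(1)^g onto the quotient by simultaneous conjugation of the set {(B₁, …, B_g, C₁, C₂, C₃) : each Bₖ is a unit quaternion, each Cᵢ is a purely imaginary unit quaternion, and C₁C₂C₃ = 1}. (This is the identification L_α ≅ (S³)^g of the Lagrangian associated to the standard attaching curves of a genus g handlebody in the traceless character variety.) -/

import Mathlib

open Quaternion

noncomputable def qi : ℍ[ℝ] := ⟨0, 1, 0, 0⟩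
noncomputable def qj : ℍ[ℝ] := ⟨0, 0, 1, 0⟩
noncomputable def qk : ℍ[ℝ] := ⟨0, 0, 0, 1⟩

lemma norm_qi : ‖qi‖ = 1 := by
  have h : ‖qi‖ * ‖qi‖ = 1 := by
    rw [← Quaternion.normSq_eq_norm_mul_self, Quaternion.normSq_def']; simp [qi, Quaternion.normSq_def']
  nlinarith [norm_nonneg qi]

lemma norm_qj : ‖qj‖ = 1 := by
  have h : ‖qj‖ * ‖qj‖ = 1 := by
    rw [← Quaternion.normSq_eq_norm_mul_self, Quaternion.normSq_def']; simp [qj, Quaternion.normSq_def']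
  nlinarith [norm_nonneg qj]

lemma norm_qk : ‖qk‖ = 1 := by
  have h : ‖qk‖ * ‖qk‖ = 1 := by
    rw [← Quaternion.normSq_eq_norm_mul_self, Quaternion.normSq_def']; simp [qk, Quaternion.normSq_def']
  nlinarith [norm_nonneg qk]

lemma re_qi : qi.re = 0 := rfl
lemma re_qj : qj.re = 0 := rfl
lemma re_qk : qk.re = 0 := rfl

lemma qi_mul_qj_mul_neg_qk : qi * qj * (-qk) = 1 := by
  ext <;> simp only [Quaternion.re_mul, Quaternion.imI_mul, Quaternion.imJ_mul, Quaternion.imK_mul, Quaternion.re_neg, Quaternion.imI_neg, Quaternion.imJ_neg, Quaternion.imK_neg] <;> simp [qi, qj, qk]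

/-- Simultaneous conjugation by unit quaternions, as a relation on tuples of quaternions. -/
def uConj {ι : Type} (x y : ι → ℍ[ℝ]) : Prop :=
  ∃ D : ℍ[ℝ], ‖D‖ = 1 ∧ ∀ k, y k = D * x k * D⁻¹

theorem uConj_equivalence (ι : Type) : Equivalence (@uConj ι) := by
  constructor
  · intro x
    exact ⟨1, norm_one, fun k => by simp⟩
  · rintro x y ⟨D, hD, h⟩
    have hD0 : D ≠ 0 := by
      intro h0; rw [h0, norm_zero] at hD; norm_num at hD
    refine ⟨D⁻¹, by rw [norm_inv, hD]; norm_num, fun k => ?_⟩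
    rw [h k, inv_inv]
    simp [mul_assoc, inv_mul_cancel₀ hD0, inv_mul_cancel_left₀ hD0]
  · rintro x y z ⟨D, hD, h⟩ ⟨E, hE, h'⟩
    refine ⟨E * D, by rw [norm_mul, hD, hE]; norm_num, fun k => ?_⟩
    rw [h' k, h k, mul_inv_rev]
    simp [mul_assoc]

/-- The setoid of simultaneous conjugation on tuples of quaternions. -/
def conjSetoid (ι : Type) : Setoid (ι → ℍ[ℝ]) := ⟨uConj, uConj_equivalence ι⟩

/-- The setoid of simultaneous conjugation restricted to a conjugation-invariant subset. -/
def conjSetoidOn {ι : Type} (S : Set (ι → ℍ[ℝ])) : Setoid S :=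
  (conjSetoid ι).comap Subtype.val

/-- The set of tuples `(B₁, …, B_g, C₁, C₂, C₃)` with each `Bₖ` a unit quaternion, each `Cᵢ`
a purely imaginary unit quaternion, and `C₁C₂C₃ = 1`. -/
def S5 (g : ℕ) : Set (Fin g ⊕ Fin 3 → ℍ[ℝ]) :=
  {x | (∀ k : Fin g, ‖x (Sum.inl k)‖ = 1) ∧
    (∀ j : Fin 3, ‖x (Sum.inr j)‖ = 1 ∧ (x (Sum.inr j)).re = 0) ∧
    x (Sum.inr 0) * x (Sum.inr 1) * x (Sum.inr 2) = 1}

lemma mem_S5 {g : ℕ} (B : {B : Fin g → ℍ[ℝ] // ∀ k, ‖B k‖ = 1}) :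
    Sum.elim B.val ![qi, qj, -qk] ∈ S5 g := by
  refine ⟨fun k => B.property k, fun j => ?_, ?_⟩
  · fin_cases j <;>
      simp [norm_qi, norm_qj, norm_qk, re_qi, re_qj, re_qk]
  · show qi * qj * (-qk) = 1
    exact qi_mul_qj_mul_neg_qk

/-!
A unit quaternion conjugating `𝐢` to `𝐢` and `𝐣` to `𝐣` commutes with both, hence is real and
central, so it fixes the `Bₖ` too: the map is injective. For surjectivity, `C₁C₂C₃ = 1` with
`Cᵢ² = -1` forces `C₁C₂ = -C₃` and hence `C₂C₁ = -C₁C₂`. Any two anticommuting square roots of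
`-1` in a division ring are simultaneously conjugate to any other such pair, in particular to
`(𝐢, 𝐣)`, and the same conjugation then carries `C₃ = -C₁C₂` to `-𝐢𝐣 = -𝐤`.
-/

section SquareRootsOfMinusOne

variable {R : Type*}

lemma mul_eq_neg_of_mul_mul_eq_one [Ring R] {p q r : R} (hr : r * r = -1) (h : p * q * r = 1) :
    p * q = -r := by
  calc p * q = p * q * r * -r := by rw [mul_neg, mul_assoc (p * q), hr]; simp
    _ = -r := by rw [h, one_mul]

lemma mul_comm_eq_neg_of_mul_self_eq_neg_one [Ring R] {p q : R} (hp : p * p = -1)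
    (hq : q * q = -1) (hpq : p * q * (p * q) = -1) : q * p = -(p * q) := by
  calc q * p = -(p * p) * (q * p) * -(q * q) := by rw [hp, hq]; simp
    _ = p * (p * q * (p * q)) * q := by noncomm_ring
    _ = -(p * q) := by rw [hpq]; simp

/-- The witness is `1 - a * b`, or `c` when `a = -b`. -/
lemma exists_ne_zero_mul_eq_mul [Ring R] {a b c : R} (ha : a * a = -1) (hb : b * b = -1)
    (hc : c ≠ 0) (hcb : c * b = -(b * c)) :
    ∃ D ≠ 0, D * b = a * D ∧ (c * a = -(a * c) → Commute D c) := by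
  by_cases hab : a = -b
  · exact ⟨c, hc, by rw [hcb, hab, neg_mul], fun _ => Commute.refl c⟩
  refine ⟨1 - a * b, fun h => hab ?_, ?_, fun hca => ?_⟩
  · calc a = a * (a * b) := by rw [← sub_eq_zero.mp h, mul_one]
      _ = -b := by rw [← mul_assoc, ha, neg_one_mul]
  · calc (1 - a * b) * b = b - a * (b * b) := by noncomm_ring
      _ = a - a * a * b := by rw [ha, hb]; noncomm_ring
      _ = a * (1 - a * b) := by noncomm_ring
  · calc (1 - a * b) * c = c - a * (b * c) := by noncomm_ring
      _ = c - c * a * b := by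
        rw [show b * c = -(c * b) by rw [hcb, neg_neg], mul_neg, ← mul_assoc, ← neg_mul, ← hca]
      _ = c * (1 - a * b) := by noncomm_ring

/-- First conjugate `i` to `p`, then conjugate the image of `j` to `q` by an element fixing `i`. -/
lemma exists_conj_eq_of_anticommute [DivisionRing R] {i j p q : R} (hi : i * i = -1)
    (hj : j * j = -1) (hji : j * i = -(i * j)) (hp : p * p = -1) (hq : q * q = -1)
    (hqp : q * p = -(p * q)) : ∃ D ≠ 0, D * i = p * D ∧ D * j = q * D := by
  have hne {x : R} (hx : x * x = -1) : x ≠ 0 := by rintro rfl; simp at hx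
  obtain ⟨D₁, hD₁, hD₁i, -⟩ := exists_ne_zero_mul_eq_mul hp hi (hne hj) hji
  set q' := D₁⁻¹ * q * D₁ with hq'_def
  have hq' : q' * q' = -1 :=
    calc q' * q' = D₁⁻¹ * (q * q) * D₁ := by
          simp only [hq'_def, mul_assoc, mul_inv_cancel_left₀ hD₁]
      _ = -1 := by rw [hq, mul_neg_one, neg_mul, inv_mul_cancel₀ hD₁]
  have hiD₁ : i * D₁⁻¹ = D₁⁻¹ * p := by
    rw [eq_inv_mul_iff_mul_eq₀ hD₁, ← mul_assoc, hD₁i, mul_assoc, mul_inv_cancel₀ hD₁, mul_one]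
  have hiq' : i * q' = -(q' * i) := by
    calc i * q' = D₁⁻¹ * (p * q) * D₁ := by
          rw [hq'_def, ← mul_assoc, ← mul_assoc, hiD₁, mul_assoc D₁⁻¹]
      _ = -(q' * i) := by
          rw [← neg_neg (p * q), ← hqp, hq'_def, mul_assoc _ D₁, hD₁i]; noncomm_ring
  have hij : i * j = -(j * i) := by rw [hji, neg_neg]
  obtain ⟨D₂, hD₂, hD₂j, hD₂i⟩ := exists_ne_zero_mul_eq_mul hq' hj (hne hi) hij
  refine ⟨D₁ * D₂, mul_ne_zero hD₁ hD₂, ?_, ?_⟩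
  · rw [mul_assoc, (hD₂i hiq').eq, ← mul_assoc, hD₁i, mul_assoc]
  · rw [mul_assoc, hD₂j, hq'_def, ← mul_assoc, ← mul_assoc, mul_inv_cancel_left₀ hD₁, mul_assoc]

end SquareRootsOfMinusOne

namespace Quaternion

lemma mul_self_eq_neg_one {x : ℍ[ℝ]} (hx : ‖x‖ = 1) (hre : x.re = 0) : x * x = -1 := by
  rw [← neg_neg (x * x), ← mul_neg, ← star_eq_neg.mpr hre, self_mul_star,
    normSq_eq_norm_mul_self, hx, mul_one, coe_one]

lemma eq_coe_re_of_commute_qi_qj {D : ℍ[ℝ]} (hi : Commute D qi) (hj : Commute D qj) :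
    D = (D.re : ℍ[ℝ]) := by
  have hJ := congrArg QuaternionAlgebra.imK hi.eq
  have hK := congrArg QuaternionAlgebra.imJ hi.eq
  have hI := congrArg QuaternionAlgebra.imK hj.eq
  simp only [imJ_mul, imK_mul] at hI hJ hK
  simp [qi, qj] at hI hJ hK
  ext <;> simp <;> linarith

end Quaternion

lemma qi_mul_self : qi * qi = -1 := mul_self_eq_neg_one norm_qi re_qi
lemma qj_mul_self : qj * qj = -1 := mul_self_eq_neg_one norm_qj re_qj

lemma qi_mul_qj : qi * qj = qk := by
  ext <;> simp only [Quaternion.re_mul, Quaternion.imI_mul, Quaternion.imJ_mul,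
    Quaternion.imK_mul] <;> simp [qi, qj, qk]

lemma qj_mul_qi : qj * qi = -(qi * qj) := by
  ext <;> simp only [Quaternion.re_mul, Quaternion.imI_mul, Quaternion.imJ_mul, Quaternion.imK_mul,
    Quaternion.re_neg, Quaternion.imI_neg, Quaternion.imJ_neg, Quaternion.imK_neg] <;> simp [qi, qj]

lemma uConj_iff {ι : Type} {x y : ι → ℍ[ℝ]} :
    uConj x y ↔ ∃ D ≠ 0, ∀ k, y k * D = D * x k := by
  constructor
  · rintro ⟨D, hD, h⟩
    have hD₀ : D ≠ 0 := norm_ne_zero_iff.mp (by rw [hD]; exact one_ne_zero)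
    exact ⟨D, hD₀, fun k => by rw [h k, inv_mul_cancel_right₀ hD₀]⟩
  · rintro ⟨D, hD, h⟩
    have hnD : ‖D‖ ≠ 0 := norm_ne_zero_iff.mpr hD
    refine ⟨(‖D‖⁻¹ : ℝ) • D, by rw [norm_smul, norm_inv, norm_norm, inv_mul_cancel₀ hnD],
      fun k => ?_⟩
    rw [eq_mul_inv_iff_mul_eq₀ (smul_ne_zero (inv_ne_zero hnD) hD), mul_smul_comm, h k,
      smul_mul_assoc]

/-- The map `(B₁, …, B_g) ↦ [(B₁, …, B_g, 𝐢, 𝐣, −𝐤)]` is a bijection from `Sp(1)^g` onto the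
quotient of `S5 g` by simultaneous conjugation: `L_α ≅ (S³)^g`. -/
theorem handlebody_lagrangian_is_S3_power (g : ℕ) :
    Function.Bijective (fun B : {B : Fin g → ℍ[ℝ] // ∀ k, ‖B k‖ = 1} =>
      Quotient.mk (conjSetoidOn (S5 g)) ⟨Sum.elim B.val ![qi, qj, -qk], mem_S5 B⟩) := by
  constructor
  · intro B₁ B₂ h
    obtain ⟨D, hD, hDx⟩ := uConj_iff.mp (Quotient.exact h)
    have hD_real := eq_coe_re_of_commute_qi_qj (hDx (Sum.inr 0)).symm (hDx (Sum.inr 1)).symm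
    refine Subtype.ext (funext fun k => mul_right_cancel₀ hD ?_)
    calc B₁.val k * D = D * B₁.val k := by rw [hD_real]; exact (coe_commutes _ _).symm
      _ = B₂.val k * D := (hDx (.inl k)).symm
  · rintro ⟨⟨x, hB, hC, hpqr⟩⟩
    have hsq (j : Fin 3) : x (.inr j) * x (.inr j) = -1 := mul_self_eq_neg_one (hC j).1 (hC j).2
    have hpq := mul_eq_neg_of_mul_mul_eq_one (hsq 2) hpqr
    have hqp := mul_comm_eq_neg_of_mul_self_eq_neg_one (hsq 0) (hsq 1)
      (by rw [hpq, neg_mul_neg, hsq 2])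
    obtain ⟨D, hD, hDi, hDj⟩ :=
      exists_conj_eq_of_anticommute qi_mul_self qj_mul_self qj_mul_qi (hsq 0) (hsq 1) hqp
    refine ⟨⟨fun k => D⁻¹ * x (.inl k) * D, fun k => by simp [hB k, hD]⟩,
      Quotient.sound (uConj_iff.mpr ⟨D, hD, ?_⟩)⟩
    rintro (k | j)
    · simp [mul_assoc, hD]
    fin_cases j
    · exact hDi.symm
    · exact hDj.symm
    · show x (.inr 2) * D = D * -qk
      rw [← qi_mul_qj, mul_neg, ← mul_assoc, hDi, mul_assoc, hDj, ← mul_assoc, hpq, neg_mul, neg_neg]
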